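/- arXiv:2502.12902 — 2 statements merged into one kernel-verified Lean document; each statement's English description precedes it below -/
import Mathlib

section
/- Let H be a separable Hilbert space and let P, Q be Borel probability measures on H with finite first moments. Then E‖X−Y‖ − (1/2)E‖X−X'‖ − (1/2)E‖Y−Y'‖ ≥ 0, where X,X' i.i.d. ∼ P, Y,Y' i.i.d. ∼ Q, with X independent of Y. -/
/-!
On `ℝ`, `|x - y|` is the Lebesgue integral over `t` of the cut kernels of the half-lines
`Iio t`, and for a single cut `S` the energy inequality reduces to `(μ S - ν S) ^ 2 ≥ 0`.
The inequality is preserved by pulling back along measurable maps, by mixtures and by pointwise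
limits from below (Fatou). In a finite-dimensional inner product space, `‖x - y‖` is a constant
multiple of the average of `|⟪x - y, w⟫|` over the standard Gaussian `w`, a mixture of pullbacks
of the one-dimensional case. A separable Hilbert space is exhausted by finite-dimensional
subspaces, whose orthogonal projections converge pointwise to the identity and do not increase
distances.
-/

open MeasureTheory ENNReal Set Filter Topology Function ProbabilityTheory
open scoped NNReal RealInnerProductSpace

/-- Integrated form of negative type: every energy distance built from `d` is nonnegative. -/
def IsNegativeType {α : Type*} [MeasurableSpace α] (d : α → α → ℝ≥0∞) : Prop :=
  ∀ (μ ν : Measure α) [IsProbabilityMeasure μ] [IsProbabilityMeasure ν],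
    ∫⁻ z, d z.1 z.2 ∂μ.prod μ + ∫⁻ z, d z.1 z.2 ∂ν.prod ν ≤ 2 * ∫⁻ z, d z.1 z.2 ∂μ.prod ν

namespace IsNegativeType

variable {α β ι : Type*} [MeasurableSpace α] [MeasurableSpace β] [MeasurableSpace ι]

theorem comp {d : β → β → ℝ≥0∞} (hd : IsNegativeType d) (hdm : Measurable (uncurry d))
    {f : α → β} (hf : Measurable f) : IsNegativeType fun x y => d (f x) (f y) := by
  intro μ ν _ _
  have hmap : ∀ (μ' ν' : Measure α) [IsProbabilityMeasure μ'] [IsProbabilityMeasure ν'],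
      ∫⁻ z, d (f z.1) (f z.2) ∂μ'.prod ν' = ∫⁻ z, d z.1 z.2 ∂(μ'.map f).prod (ν'.map f) := by
    intro μ' ν' _ _
    rw [Measure.map_prod_map _ _ hf hf]
    exact (lintegral_map hdm (hf.prodMap hf)).symm
  have := Measure.isProbabilityMeasure_map (μ := μ) hf.aemeasurable
  have := Measure.isProbabilityMeasure_map (μ := ν) hf.aemeasurable
  simpa only [hmap] using hd (μ.map f) (ν.map f)

theorem lintegral {d : ι → α → α → ℝ≥0∞} (hd : ∀ i, IsNegativeType (d i))
    (hdm : Measurable fun p : ι × α × α => d p.1 p.2.1 p.2.2) (κ : Measure ι) [SFinite κ] :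
    IsNegativeType fun x y => ∫⁻ i, d i x y ∂κ := by
  intro μ ν _ _
  have hswap : ∀ (μ' ν' : Measure α) [IsProbabilityMeasure μ'] [IsProbabilityMeasure ν'],
      ∫⁻ z, ∫⁻ i, d i z.1 z.2 ∂κ ∂μ'.prod ν' = ∫⁻ i, ∫⁻ z, d i z.1 z.2 ∂μ'.prod ν' ∂κ := by
    intro μ' ν' _ _
    exact lintegral_lintegral_swap (hdm.comp measurable_swap).aemeasurable
  rw [hswap, hswap, hswap, ← lintegral_add_left hdm.lintegral_prod_right',
    ← lintegral_const_mul' _ _ ofNat_ne_top]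
  exact lintegral_mono fun i => hd i μ ν

theorem of_tendsto {d : ℕ → α → α → ℝ≥0∞} {d' : α → α → ℝ≥0∞}
    (hd : ∀ n, IsNegativeType (d n)) (hdm : ∀ n, Measurable (uncurry (d n)))
    (hlim : ∀ x y, Tendsto (fun n => d n x y) atTop (𝓝 (d' x y)))
    (hle : ∀ n x y, d n x y ≤ d' x y) : IsNegativeType d' := by
  intro μ ν _ _
  have hfatou : ∀ ρ : Measure (α × α),
      ∫⁻ z, d' z.1 z.2 ∂ρ ≤ liminf (fun n => ∫⁻ z, d n z.1 z.2 ∂ρ) atTop := fun ρ =>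
    calc ∫⁻ z, d' z.1 z.2 ∂ρ = ∫⁻ z, liminf (fun n => d n z.1 z.2) atTop ∂ρ :=
          lintegral_congr fun z => (hlim z.1 z.2).liminf_eq.symm
      _ ≤ _ := lintegral_liminf_le hdm
  calc ∫⁻ z, d' z.1 z.2 ∂μ.prod μ + ∫⁻ z, d' z.1 z.2 ∂ν.prod ν
      ≤ liminf (fun n => ∫⁻ z, d n z.1 z.2 ∂μ.prod μ + ∫⁻ z, d n z.1 z.2 ∂ν.prod ν) atTop := by
        simpa only [lintegral_add_measure] using hfatou (μ.prod μ + ν.prod ν)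
    _ ≤ liminf (fun n => 2 * ∫⁻ z, d n z.1 z.2 ∂μ.prod ν) atTop :=
        liminf_le_liminf (Eventually.of_forall fun n => hd n μ ν)
    _ ≤ 2 * ∫⁻ z, d' z.1 z.2 ∂μ.prod ν := by
        refine liminf_le_of_frequently_le' (Frequently.of_forall fun n => ?_)
        gcongr with z
        exact hle n z.1 z.2

end IsNegativeType

theorem ENNReal.mul_add_mul_le_of_add_eq_one {a a' b b' : ℝ≥0∞} (ha : a + a' = 1)
    (hb : b + b' = 1) : a * a' + b * b' ≤ a * b' + a' * b := by
  lift a to ℝ≥0 using ne_top_of_le_ne_top one_ne_top (ha ▸ le_self_add)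
  lift a' to ℝ≥0 using ne_top_of_le_ne_top one_ne_top (ha ▸ le_add_self)
  lift b to ℝ≥0 using ne_top_of_le_ne_top one_ne_top (hb ▸ le_self_add)
  lift b' to ℝ≥0 using ne_top_of_le_ne_top one_ne_top (hb ▸ le_add_self)
  have ha' : (a : ℝ) + a' = 1 := by exact_mod_cast ha
  have hb' : (b : ℝ) + b' = 1 := by exact_mod_cast hb
  have key : (a : ℝ) * a' + b * b' ≤ a * b' + a' * b := by nlinarith [sq_nonneg ((a : ℝ) - b)]
  exact_mod_cast key

theorem isNegativeType_cut {α : Type*} [MeasurableSpace α] {S : Set α} (hS : MeasurableSet S) :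
    IsNegativeType fun x y => (S ×ˢ Sᶜ ∪ Sᶜ ×ˢ S).indicator 1 (x, y) := by
  intro μ ν _ _
  have hcut : ∀ (μ' ν' : Measure α) [IsProbabilityMeasure μ'] [IsProbabilityMeasure ν'],
      ∫⁻ z, (S ×ˢ Sᶜ ∪ Sᶜ ×ˢ S).indicator 1 (z.1, z.2) ∂μ'.prod ν'
        = μ' S * ν' Sᶜ + μ' Sᶜ * ν' S := by
    intro μ' ν' _ _
    have hdisj : Disjoint (S ×ˢ Sᶜ) (Sᶜ ×ˢ S) :=
      disjoint_prod.2 (Or.inl disjoint_compl_right)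
    rw [lintegral_indicator_one ((hS.prod hS.compl).union (hS.compl.prod hS)),
      measure_union hdisj (hS.compl.prod hS), Measure.prod_prod, Measure.prod_prod]
  simp only [hcut]
  have hμ : μ S + μ Sᶜ = 1 := by rw [measure_add_measure_compl hS, measure_univ]
  have hν : ν S + ν Sᶜ = 1 := by rw [measure_add_measure_compl hS, measure_univ]
  calc μ S * μ Sᶜ + μ Sᶜ * μ S + (ν S * ν Sᶜ + ν Sᶜ * ν S)
      = 2 * (μ S * μ Sᶜ + ν S * ν Sᶜ) := by ring
    _ ≤ 2 * (μ S * ν Sᶜ + μ Sᶜ * ν S) :=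
        mul_le_mul_right (ENNReal.mul_add_mul_le_of_add_eq_one hμ hν) 2

theorem Real.edist_eq_lintegral_indicator_cut (x y : ℝ) :
    edist x y = ∫⁻ t, (Iio t ×ˢ (Iio t)ᶜ ∪ (Iio t)ᶜ ×ˢ Iio t).indicator 1 (x, y) := by
  have hcut : ∀ t, (Iio t ×ˢ (Iio t)ᶜ ∪ (Iio t)ᶜ ×ˢ Iio t).indicator (1 : ℝ × ℝ → ℝ≥0∞) (x, y)
      = (uIoc x y).indicator 1 t := by
    intro t
    simp only [indicator, uIoc_eq_union, mem_union, mem_prod, mem_compl_iff, mem_Iio, mem_Ioc,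
      not_lt, Pi.one_apply, and_comm (a := t ≤ x)]
  simp_rw [hcut, lintegral_indicator_one measurableSet_uIoc, Real.volume_uIoc, edist_dist,
    Real.dist_eq, abs_sub_comm]

theorem Real.isNegativeType_edist : IsNegativeType (edist : ℝ → ℝ → ℝ≥0∞) := by
  rw [show (edist : ℝ → ℝ → ℝ≥0∞) = _ from funext₂ Real.edist_eq_lintegral_indicator_cut]
  refine IsNegativeType.lintegral (fun t => isNegativeType_cut measurableSet_Iio) ?_ volume
  simp only [indicator, mem_union, mem_prod, mem_compl_iff, mem_Iio]
  refine Measurable.ite ?_ measurable_const measurable_const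
  have h₁ : MeasurableSet {p : ℝ × ℝ × ℝ | p.2.1 < p.1} :=
    measurableSet_lt (by fun_prop) (by fun_prop)
  have h₂ : MeasurableSet {p : ℝ × ℝ × ℝ | p.2.2 < p.1} :=
    measurableSet_lt (by fun_prop) (by fun_prop)
  exact (h₁.inter h₂.compl).union (h₁.compl.inter h₂)

theorem lintegral_enorm_gaussianReal_ne_zero : ∫⁻ t, ‖t‖ₑ ∂gaussianReal 0 1 ≠ 0 := by
  intro h
  rw [lintegral_eq_zero_iff (by fun_prop)] at h
  have := nullSingletonClass_gaussianReal (μ := 0) one_ne_zero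
  obtain ⟨t, ht₀, ht⟩ := (h.and (Measure.ae_ne _ 0)).exists
  exact ht (enorm_eq_zero.1 ht₀)

theorem lintegral_enorm_gaussianReal_ne_top : ∫⁻ t, ‖t‖ₑ ∂gaussianReal 0 1 ≠ ⊤ :=
  ((memLp_id_gaussianReal 1).integrable le_rfl).hasFiniteIntegral.ne

section FiniteDimensional

variable {E : Type*} [NormedAddCommGroup E] [InnerProductSpace ℝ E] [FiniteDimensional ℝ E]
  [MeasurableSpace E] [BorelSpace E]

theorem map_inner_stdGaussian (z : E) :
    (stdGaussian E).map (fun w => ⟪z, w⟫) = (gaussianReal 0 1).map (‖z‖ * ·) := by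
  have h := IsGaussian.map_eq_gaussianReal (μ := stdGaussian E) (innerSL ℝ z)
  rw [integral_strongDual_stdGaussian, variance_dual_stdGaussian, innerSL_apply_norm] at h
  rw [gaussianReal_map_const_mul, mul_zero]
  convert h using 2
  · ext; rfl
  rw [mul_one, Real.toNNReal_of_nonneg (sq_nonneg _)]

theorem lintegral_enorm_inner_stdGaussian (z : E) :
    ∫⁻ w, ‖⟪z, w⟫‖ₑ ∂stdGaussian E = ‖z‖ₑ * ∫⁻ t, ‖t‖ₑ ∂gaussianReal 0 1 := by
  rw [← lintegral_map (f := fun t : ℝ => ‖t‖ₑ) (by fun_prop) (by fun_prop),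
    map_inner_stdGaussian, lintegral_map (by fun_prop) (by fun_prop)]
  simp_rw [enorm_mul, enorm_norm]
  exact lintegral_const_mul _ (by fun_prop)

theorem isNegativeType_edist_of_finiteDimensional : IsNegativeType (edist : E → E → ℝ≥0∞) := by
  set c := ∫⁻ t, ‖t‖ₑ ∂gaussianReal 0 1
  have hrepr : ∀ x y : E, edist x y = ∫⁻ w, edist ⟪x, w⟫ ⟪y, w⟫ ∂(c⁻¹ • stdGaussian E) := by
    intro x y
    simp_rw [lintegral_smul_measure, edist_eq_enorm_sub, ← inner_sub_left,
      lintegral_enorm_inner_stdGaussian, smul_eq_mul]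
    rw [mul_left_comm, ENNReal.inv_mul_cancel lintegral_enorm_gaussianReal_ne_zero
      lintegral_enorm_gaussianReal_ne_top, mul_one]
  rw [show (edist : E → E → ℝ≥0∞) = _ from funext₂ hrepr]
  exact IsNegativeType.lintegral
    (fun w => Real.isNegativeType_edist.comp measurable_edist (by fun_prop)) (by fun_prop) _

end FiniteDimensional

theorem exists_monotone_finiteDimensional_dense (𝕜 E : Type*) [NontriviallyNormedField 𝕜]
    [NormedAddCommGroup E] [NormedSpace 𝕜 E] [TopologicalSpace.SeparableSpace E] :
    ∃ K : ℕ → Submodule 𝕜 E, Monotone K ∧ (∀ n, FiniteDimensional 𝕜 (K n)) ∧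
      ⊤ ≤ (⨆ n, K n).topologicalClosure := by
  set e := TopologicalSpace.denseSeq E
  refine ⟨fun n => Submodule.span 𝕜 (e '' Iio n), fun m n h => ?_, fun n => ?_, ?_⟩
  · exact Submodule.span_mono (image_mono (Iio_subset_Iio h))
  · exact FiniteDimensional.span_of_finite 𝕜 ((finite_Iio n).image e)
  · have hrange : range e ⊆ (⨆ n, Submodule.span 𝕜 (e '' Iio n) : Submodule 𝕜 E) := by
      rintro _ ⟨i, rfl⟩
      exact Submodule.mem_iSup_of_mem (i + 1)
        (Submodule.subset_span (mem_image_of_mem e (Nat.lt_succ_self i)))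
    exact (Submodule.dense_iff_topologicalClosure_eq_top.1
      ((TopologicalSpace.denseRange_denseSeq E).mono hrange)).ge

theorem isNegativeType_edist {H : Type*} [NormedAddCommGroup H] [InnerProductSpace ℝ H]
    [SecondCountableTopology H] [MeasurableSpace H] [BorelSpace H] :
    IsNegativeType (edist : H → H → ℝ≥0∞) := by
  obtain ⟨K, hmono, hfin, hdense⟩ := exists_monotone_finiteDimensional_dense ℝ H
  refine IsNegativeType.of_tendsto
    (d := fun n x y => edist ((K n).orthogonalProjectionOnto x) ((K n).orthogonalProjectionOnto y))
    (fun n => ?_) (fun n => by fun_prop) (fun x y => ?_) (fun n x y => ?_)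
  · exact isNegativeType_edist_of_finiteDimensional.comp measurable_edist (by fun_prop)
  · exact (Submodule.starProjection_tendsto_self K hmono x hdense).edist
      (Submodule.starProjection_tendsto_self K hmono y hdense)
  · simpa using (K n).lipschitzWith_orthogonalProjectionOnto.edist_le_mul x y

theorem ofReal_integral_norm_sub_prod {E : Type*} [NormedAddCommGroup E]
    [SecondCountableTopology E] [MeasurableSpace E] [BorelSpace E] {μ ν : Measure E}
    [IsFiniteMeasure μ] [IsFiniteMeasure ν]
    (hμ : Integrable (fun x => ‖x‖) μ) (hν : Integrable (fun x => ‖x‖) ν) :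
    ENNReal.ofReal (∫ z, ‖z.1 - z.2‖ ∂μ.prod ν) = ∫⁻ z, edist z.1 z.2 ∂μ.prod ν := by
  have hint : Integrable (fun z : E × E => ‖z.1 - z.2‖) (μ.prod ν) :=
    ((hμ.comp_fst ν).add (hν.comp_snd μ)).mono' (by fun_prop)
      (Eventually.of_forall fun z => by simpa using norm_sub_le z.1 z.2)
  rw [ofReal_integral_eq_lintegral_ofReal hint (Eventually.of_forall fun z => norm_nonneg _)]
  simp_rw [edist_dist, dist_eq_norm]

theorem energyDistance_nonneg_general {H : Type*} [NormedAddCommGroup H]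
    [InnerProductSpace ℝ H] [SecondCountableTopology H]
    [MeasurableSpace H] [BorelSpace H]
    (P Q : Measure H) [IsProbabilityMeasure P] [IsProbabilityMeasure Q]
    (hP : Integrable (fun x => ‖x‖) P) (hQ : Integrable (fun x => ‖x‖) Q) :
    0 ≤ (∫ p, ‖p.1 - p.2‖ ∂(P.prod Q))
      - (1/2) * (∫ p, ‖p.1 - p.2‖ ∂(P.prod P))
      - (1/2) * (∫ p, ‖p.1 - p.2‖ ∂(Q.prod Q)) := by
  have h := isNegativeType_edist P Q
  rw [← ofReal_integral_norm_sub_prod hP hP, ← ofReal_integral_norm_sub_prod hQ hQ,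
    ← ofReal_integral_norm_sub_prod hP hQ,
    ← ENNReal.ofReal_add (integral_nonneg fun _ => norm_nonneg _)
      (integral_nonneg fun _ => norm_nonneg _),
    ← ENNReal.ofReal_ofNat 2, ← ENNReal.ofReal_mul zero_le_two,
    ENNReal.ofReal_le_ofReal_iff (mul_nonneg zero_le_two (integral_nonneg fun _ => norm_nonneg _))]
    at h
  linarith

/-- Nonnegativity of the energy distance on a separable Hilbert space. -/
theorem energyDistance_nonneg {H : Type*} [NormedAddCommGroup H]
    [InnerProductSpace ℝ H] [CompleteSpace H] [SecondCountableTopology H]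
    [MeasurableSpace H] [BorelSpace H]
    (P Q : Measure H) [IsProbabilityMeasure P] [IsProbabilityMeasure Q]
    (hP : Integrable (fun x => ‖x‖) P) (hQ : Integrable (fun x => ‖x‖) Q) :
    0 ≤ (∫ p, ‖p.1 - p.2‖ ∂(P.prod Q))
      - (1/2) * (∫ p, ‖p.1 - p.2‖ ∂(P.prod P))
      - (1/2) * (∫ p, ‖p.1 - p.2‖ ∂(Q.prod Q)) :=
  energyDistance_nonneg_general P Q hP hQ
end

section
/- If k is a bounded, measurable, symmetric, positive semidefinite kernel on a measurable space X whose kernel mean embedding Φ(P) = ∫ k(·,ω) dP(ω) is injective on the class M of probability measures with ∫√(k(x,x)) dP < ∞, then the kernel score S_k(P,x) = (1/2)E_P[k(X,X')] − E_P[k(X,x)] + (1/2)k(x,x) is strictly proper relative to M. -/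
/-!
Write `D(μ, ν) = ∫∫ k(x, y) dν(y) dμ(x)` and `Φ(μ) = ∫ k(·, ω) dμ(ω)`. The expected score gap
`E_P S(Q) - E_P S(P)` equals `½ (D(P,P) - 2 D(P,Q) + D(Q,Q))`, the squared maximum mean discrepancy.

Positive semidefiniteness passes from points to measures: integrating `∑ᵢⱼ k(yᵢ, yⱼ) ≥ 0` against
`n` i.i.d. samples from `ν` gives `n ∫ k(y,y) dν + n(n-1) D(ν,ν) ≥ 0` for every `n`, so
`D(ν,ν) ≥ 0`. A real combination `∑ₚ aₚ mₚ` of probability measures reduces to this case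
through the kernel `aₚ a_q k(x, y)` on `X × ι` and the measure `∑ₚ mₚ ⊗ δₚ`.

Hence the gap is nonnegative. Applied to `t δ_y + P - Q` for all real `t`, the same positivity
gives `(Φ(P)(y) - Φ(Q)(y))² ≤ k(y,y) · MMD²`, so a vanishing gap forces `Φ(P) = Φ(Q)`, and
injectivity of `Φ` gives `P = Q`.
-/

open MeasureTheory ProbabilityTheory Function

noncomputable section

variable {X : Type*} [MeasurableSpace X] {k : X → X → ℝ} {C : ℝ}

def meanEmbedding (k : X → X → ℝ) (μ : Measure X) (y : X) : ℝ := ∫ ω, k y ω ∂μ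

def kernelPairing (k : X → X → ℝ) (μ ν : Measure X) : ℝ := ∫ x, meanEmbedding k ν x ∂μ

def mmdSq (k : X → X → ℝ) (P Q : Measure X) : ℝ :=
  kernelPairing k P P - 2 * kernelPairing k P Q + kernelPairing k Q Q

def kernelScore (k : X → X → ℝ) (P : Measure X) (x : X) : ℝ :=
  (1/2) * (∫ p, k p.1 p.2 ∂(P.prod P)) - (∫ X, k X x ∂P) + (1/2) * k x x

lemma integrable_of_abs_le {μ : Measure X} [IsFiniteMeasure μ] {f : X → ℝ}
    (hf : Measurable f) (hC : ∀ x, |f x| ≤ C) : Integrable f μ :=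
  .of_bound hf.aestronglyMeasurable C (ae_of_all _ hC)

lemma measurable_meanEmbedding (hk : Measurable (uncurry k)) (μ : Measure X) [SFinite μ] :
    Measurable (meanEmbedding k μ) :=
  hk.stronglyMeasurable.integral_prod_right'.measurable

lemma abs_meanEmbedding_le (hbd : ∀ x y, |k x y| ≤ C) (μ : Measure X) [IsProbabilityMeasure μ]
    (y : X) : |meanEmbedding k μ y| ≤ C := by
  simpa [meanEmbedding] using
    norm_integral_le_of_norm_le_const (μ := μ) (f := k y) (ae_of_all _ (hbd y))

lemma integrable_meanEmbedding (hbd : ∀ x y, |k x y| ≤ C) (hk : Measurable (uncurry k))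
    (μ ν : Measure X) [IsProbabilityMeasure μ] [IsFiniteMeasure ν] :
    Integrable (meanEmbedding k μ) ν :=
  integrable_of_abs_le (measurable_meanEmbedding hk μ) (abs_meanEmbedding_le hbd μ)

lemma integrable_uncurry_of_abs_le (hbd : ∀ x y, |k x y| ≤ C) (hk : Measurable (uncurry k))
    (μ ν : Measure X) [IsFiniteMeasure μ] [IsFiniteMeasure ν] :
    Integrable (uncurry k) (μ.prod ν) :=
  integrable_of_abs_le hk fun p => hbd p.1 p.2

lemma kernelPairing_eq_integral_prod (hbd : ∀ x y, |k x y| ≤ C) (hk : Measurable (uncurry k))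
    (μ ν : Measure X) [IsFiniteMeasure μ] [IsFiniteMeasure ν] :
    kernelPairing k μ ν = ∫ p, k p.1 p.2 ∂(μ.prod ν) :=
  (integral_prod _ (integrable_uncurry_of_abs_le hbd hk μ ν)).symm

lemma kernelPairing_comm (hbd : ∀ x y, |k x y| ≤ C) (hk : Measurable (uncurry k))
    (hsymm : ∀ x y, k x y = k y x) (μ ν : Measure X) [IsFiniteMeasure μ] [IsFiniteMeasure ν] :
    kernelPairing k μ ν = kernelPairing k ν μ := by
  simp only [kernelPairing, meanEmbedding]
  rw [integral_integral_swap (integrable_uncurry_of_abs_le hbd hk μ ν)]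
  exact integral_congr_ae (ae_of_all _ fun y => integral_congr_ae (ae_of_all _ fun x => hsymm x y))

lemma kernelPairing_dirac_left (hk : Measurable (uncurry k)) (μ : Measure X) [SFinite μ] (y : X) :
    kernelPairing k (Measure.dirac y) μ = meanEmbedding k μ y :=
  integral_dirac' _ _ (measurable_meanEmbedding hk μ).stronglyMeasurable

lemma kernelPairing_dirac_right (hk : Measurable (uncurry k)) (hsymm : ∀ x y, k x y = k y x)
    (μ : Measure X) (y : X) : kernelPairing k μ (Measure.dirac y) = meanEmbedding k μ y := by
  refine integral_congr_ae (ae_of_all _ fun x => ?_)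
  rw [meanEmbedding, integral_dirac' _ _ hk.of_uncurry_left.stronglyMeasurable, hsymm]

lemma kernelPairing_dirac_dirac (hk : Measurable (uncurry k)) (y : X) :
    kernelPairing k (Measure.dirac y) (Measure.dirac y) = k y y := by
  rw [kernelPairing_dirac_left hk, meanEmbedding,
    integral_dirac' _ _ hk.of_uncurry_left.stronglyMeasurable]

lemma kernelPairing_smul_smul (k : X → X → ℝ) (c : ENNReal) (ν : Measure X) :
    kernelPairing k (c • ν) (c • ν) = c.toReal ^ 2 * kernelPairing k ν ν := by
  simp only [kernelPairing, meanEmbedding, integral_smul_measure, smul_eq_mul, integral_const_mul]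
  ring

lemma map_pi_apply_pair_of_ne {ι : Type*} [Fintype ι] (ν : Measure X) [IsProbabilityMeasure ν]
    {i j : ι} (hij : i ≠ j) :
    (Measure.pi fun _ : ι => ν).map (fun x => (x i, x j)) = ν.prod ν := by
  have hindep := (iIndepFun_pi (μ := fun _ : ι => ν) (X := fun _ => id)
    fun _ => aemeasurable_id).indepFun hij
  rw [hindep.map_prod_eq_prod_map_map (measurable_pi_apply i).aemeasurable
    (measurable_pi_apply j).aemeasurable]
  simp only [(measurePreserving_eval (fun _ : ι => ν) _).map_eq]

lemma integral_pi_sum_sum (hbd : ∀ x y, |k x y| ≤ C) (hk : Measurable (uncurry k))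
    (ν : Measure X) [IsProbabilityMeasure ν] (n : ℕ) :
    ∫ x, ∑ i, ∑ j, k (x i) (x j) ∂(Measure.pi fun _ : Fin n => ν)
      = n * ∫ y, k y y ∂ν + ((n : ℝ) ^ 2 - n) * kernelPairing k ν ν := by
  set π := Measure.pi fun _ : Fin n => ν
  have hint : ∀ i j : Fin n, Integrable (fun x : Fin n → X => k (x i) (x j)) π := fun i j =>
    integrable_of_abs_le (by fun_prop) fun x => hbd _ _
  have hterm : ∀ i j : Fin n, ∫ x, k (x i) (x j) ∂π
      = kernelPairing k ν ν + if i = j then ∫ y, k y y ∂ν - kernelPairing k ν ν else 0 := by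
    intro i j
    split_ifs with hij
    · subst hij
      rw [add_sub_cancel, ← (measurePreserving_eval (fun _ : Fin n => ν) i).map_eq,
        integral_map (measurable_pi_apply i).aemeasurable
          (by fun_prop : Measurable fun y => k y y).aestronglyMeasurable]
    · rw [add_zero, kernelPairing_eq_integral_prod hbd hk, ← map_pi_apply_pair_of_ne ν hij,
        integral_map ((measurable_pi_apply i).prodMk (measurable_pi_apply j)).aemeasurable]
      rw [map_pi_apply_pair_of_ne ν hij]
      exact hk.aestronglyMeasurable
  rw [integral_finsetSum _ fun i _ => integrable_finsetSum _ fun j _ => hint i j]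
  simp_rw [integral_finsetSum _ fun j _ => hint _ j, hterm, Finset.sum_add_distrib,
    Finset.sum_ite_eq, if_pos (Finset.mem_univ _), Finset.sum_const, Finset.card_univ,
    Fintype.card_fin, nsmul_eq_mul]
  ring

lemma nonneg_of_forall_nat_mul_add_nonneg {A B : ℝ}
    (h : ∀ n : ℕ, 0 ≤ n * B + ((n : ℝ) ^ 2 - n) * A) : 0 ≤ A := by
  by_contra! hA
  obtain ⟨n, hn⟩ := exists_nat_gt (B / -A)
  have hB : B < n * -A := (div_lt_iff₀ (neg_pos.2 hA)).1 hn
  have := h (n + 1)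
  push_cast at this
  nlinarith

lemma kernelPairing_self_nonneg_of_isProbabilityMeasure (hbd : ∀ x y, |k x y| ≤ C)
    (hk : Measurable (uncurry k)) (hpsd : ∀ (n : ℕ) (x : Fin n → X), 0 ≤ ∑ i, ∑ j, k (x i) (x j))
    (ν : Measure X) [IsProbabilityMeasure ν] : 0 ≤ kernelPairing k ν ν :=
  nonneg_of_forall_nat_mul_add_nonneg fun n =>
    integral_pi_sum_sum hbd hk ν n ▸ integral_nonneg fun x => hpsd n x

theorem kernelPairing_self_nonneg (hbd : ∀ x y, |k x y| ≤ C)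
    (hk : Measurable (uncurry k)) (hpsd : ∀ (n : ℕ) (x : Fin n → X), 0 ≤ ∑ i, ∑ j, k (x i) (x j))
    (ν : Measure X) [IsFiniteMeasure ν] : 0 ≤ kernelPairing k ν ν := by
  rcases eq_zero_or_neZero ν with rfl | _
  · simp [kernelPairing]
  have hν : ν = ν Set.univ • (ν Set.univ)⁻¹ • ν := by
    rw [smul_smul, ENNReal.mul_inv_cancel (NeZero.ne _) (measure_ne_top _ _), one_smul]
  rw [hν, kernelPairing_smul_smul]
  exact mul_nonneg (sq_nonneg _) (kernelPairing_self_nonneg_of_isProbabilityMeasure hbd hk hpsd _)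

lemma integral_sum_map_prodMk {ι : Type*} [Fintype ι] [MeasurableSpace ι] {m : ι → Measure X}
    {f : X × ι → ℝ} (hf : Measurable f) (hfi : ∀ p, Integrable (fun x => f (x, p)) (m p)) :
    ∫ z, f z ∂(∑ p, (m p).map (·, p)) = ∑ p, ∫ x, f (x, p) ∂(m p) := by
  rw [integral_finsetSum_measure fun p _ =>
    (integrable_map_measure hf.aestronglyMeasurable measurable_prodMk_right.aemeasurable).2 (hfi p)]
  exact Finset.sum_congr rfl fun p _ =>
    integral_map measurable_prodMk_right.aemeasurable hf.aestronglyMeasurable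

theorem sum_mul_kernelPairing_nonneg {ι : Type*} [Fintype ι] [MeasurableSpace ι]
    [MeasurableSingletonClass ι] (hbd : ∀ x y, |k x y| ≤ C) (hk : Measurable (uncurry k))
    (hpsd : ∀ (n : ℕ) (x : Fin n → X) (c : Fin n → ℝ), 0 ≤ ∑ i, ∑ j, c i * c j * k (x i) (x j))
    (m : ι → Measure X) (hm : ∀ p, IsProbabilityMeasure (m p)) (a : ι → ℝ) :
    0 ≤ ∑ p, ∑ q, a p * a q * kernelPairing k (m p) (m q) := by
  set ν : Measure (X × ι) := ∑ p, (m p).map (·, p)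
  set K : X × ι → X × ι → ℝ := fun z w => a z.2 * a w.2 * k z.1 w.1
  have ha : Measurable a := measurable_of_countable a
  have hK : Measurable (uncurry K) := by fun_prop
  have hKbd : ∀ z w, |K z w| ≤ (∑ p, |a p|) ^ 2 * C := by
    intro z w
    have hle : ∀ p, |a p| ≤ ∑ p, |a p| := fun p =>
      Finset.single_le_sum (fun p _ => abs_nonneg (a p)) (Finset.mem_univ p)
    rw [abs_mul, abs_mul, sq]
    exact mul_le_mul (mul_le_mul (hle _) (hle _) (abs_nonneg _) (by positivity)) (hbd _ _)
      (abs_nonneg _) (by positivity)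
  have hinner : ∀ z, meanEmbedding K ν z = ∑ q, a z.2 * a q * meanEmbedding k (m q) z.1 := by
    intro z
    rw [meanEmbedding, integral_sum_map_prodMk (by fun_prop) fun q =>
      (integrable_of_abs_le hk.of_uncurry_left (hbd z.1)).const_mul (a z.2 * a q)]
    exact Finset.sum_congr rfl fun q _ => integral_const_mul (a z.2 * a q) (k z.1)
  have hpairing : kernelPairing K ν ν = ∑ p, ∑ q, a p * a q * kernelPairing k (m p) (m q) := by
    have hΦ : ∀ q, Measurable (meanEmbedding k (m q)) := fun q => measurable_meanEmbedding hk _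
    have hΦi : ∀ p q, Integrable (fun x => a p * a q * meanEmbedding k (m q) x) (m p) :=
      fun p q => (integrable_meanEmbedding hbd hk _ _).const_mul (a p * a q)
    rw [kernelPairing, integral_congr_ae (ae_of_all _ hinner),
      integral_sum_map_prodMk (by fun_prop) fun p => integrable_finsetSum _ fun q _ => hΦi p q]
    refine Finset.sum_congr rfl fun p _ => ?_
    rw [integral_finsetSum _ fun q _ => hΦi p q]
    exact Finset.sum_congr rfl fun q _ => integral_const_mul _ _
  exact hpairing ▸ kernelPairing_self_nonneg hKbd hK (fun n z => hpsd n _ _) ν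

theorem mmdSq_nonneg (hbd : ∀ x y, |k x y| ≤ C) (hk : Measurable (uncurry k))
    (hsymm : ∀ x y, k x y = k y x)
    (hpsd : ∀ (n : ℕ) (x : Fin n → X) (c : Fin n → ℝ), 0 ≤ ∑ i, ∑ j, c i * c j * k (x i) (x j))
    (P Q : Measure X) [IsProbabilityMeasure P] [IsProbabilityMeasure Q] : 0 ≤ mmdSq k P Q := by
  have h := sum_mul_kernelPairing_nonneg hbd hk hpsd ![P, Q]
    (fun p => by fin_cases p <;> assumption) ![1, -1]
  simp only [Fin.sum_univ_two, Matrix.cons_val_zero, Matrix.cons_val_one] at h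
  rw [kernelPairing_comm hbd hk hsymm Q P] at h
  rw [mmdSq]
  linarith

theorem sq_meanEmbedding_sub_le (hbd : ∀ x y, |k x y| ≤ C) (hk : Measurable (uncurry k))
    (hsymm : ∀ x y, k x y = k y x)
    (hpsd : ∀ (n : ℕ) (x : Fin n → X) (c : Fin n → ℝ), 0 ≤ ∑ i, ∑ j, c i * c j * k (x i) (x j))
    (P Q : Measure X) [IsProbabilityMeasure P] [IsProbabilityMeasure Q] (y : X) :
    (meanEmbedding k P y - meanEmbedding k Q y) ^ 2 ≤ k y y * mmdSq k P Q := by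
  have hquad : ∀ t : ℝ, 0 ≤ k y y * (t * t)
      + 2 * (meanEmbedding k P y - meanEmbedding k Q y) * t + mmdSq k P Q := by
    intro t
    have h := sum_mul_kernelPairing_nonneg hbd hk hpsd ![Measure.dirac y, P, Q]
      (fun p => by
        fin_cases p
        exacts [(inferInstance : IsProbabilityMeasure (Measure.dirac y)), by assumption,
          by assumption]) ![t, 1, -1]
    simp only [Fin.sum_univ_three, Matrix.cons_val_zero, Matrix.cons_val_one,
      Matrix.cons_val_two, Matrix.tail_cons, Matrix.head_cons] at h
    rw [kernelPairing_dirac_dirac hk, kernelPairing_dirac_left hk, kernelPairing_dirac_left hk,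
      kernelPairing_dirac_right hk hsymm, kernelPairing_dirac_right hk hsymm,
      kernelPairing_comm hbd hk hsymm Q P] at h
    rw [mmdSq]
    linarith
  have hdiscrim := discrim_le_zero hquad
  rw [discrim] at hdiscrim
  linarith

theorem meanEmbedding_eq_of_mmdSq_eq_zero (hbd : ∀ x y, |k x y| ≤ C) (hk : Measurable (uncurry k))
    (hsymm : ∀ x y, k x y = k y x)
    (hpsd : ∀ (n : ℕ) (x : Fin n → X) (c : Fin n → ℝ), 0 ≤ ∑ i, ∑ j, c i * c j * k (x i) (x j))
    (P Q : Measure X) [IsProbabilityMeasure P] [IsProbabilityMeasure Q] (h : mmdSq k P Q = 0) :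
    meanEmbedding k P = meanEmbedding k Q := by
  funext y
  have hle := sq_meanEmbedding_sub_le hbd hk hsymm hpsd P Q y
  rw [h, mul_zero] at hle
  exact sub_eq_zero.1 (pow_eq_zero_iff two_ne_zero |>.1 (le_antisymm hle (sq_nonneg _)))

lemma integral_kernelScore (hbd : ∀ x y, |k x y| ≤ C) (hk : Measurable (uncurry k))
    (hsymm : ∀ x y, k x y = k y x) (P Q : Measure X) [IsProbabilityMeasure P]
    [IsProbabilityMeasure Q] :
    ∫ x, kernelScore k Q x ∂P
      = (1/2) * kernelPairing k Q Q - kernelPairing k P Q + (1/2) * ∫ x, k x x ∂P := by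
  have hsymm_int : ∀ x, ∫ w, k w x ∂Q = meanEmbedding k Q x := fun x =>
    integral_congr_ae (ae_of_all _ fun w => hsymm w x)
  have hdiag : Integrable (fun x => k x x) P := integrable_of_abs_le (by fun_prop) fun x => hbd x x
  have hconst_sub : Integrable (fun x => 1/2 * kernelPairing k Q Q - meanEmbedding k Q x) P :=
    (integrable_const _).sub (integrable_meanEmbedding hbd hk Q P)
  simp only [kernelScore, ← kernelPairing_eq_integral_prod hbd hk, hsymm_int]
  rw [integral_add hconst_sub (hdiag.const_mul _),
    integral_sub (integrable_const _) (integrable_meanEmbedding hbd hk Q P), integral_const,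
    integral_const_mul]
  simp [kernelPairing]

end

/-- The kernel score of a bounded, measurable, symmetric, positive semidefinite kernel
with injective kernel mean embedding is strictly proper. -/
theorem kernelScore_strictly_proper {X : Type*} [MeasurableSpace X]
    (k : X → X → ℝ) (C : ℝ)
    (hbd : ∀ x y, |k x y| ≤ C)
    (hmeas : Measurable (Function.uncurry k))
    (hsymm : ∀ x y, k x y = k y x)
    (hpsd : ∀ (n : ℕ) (x : Fin n → X) (c : Fin n → ℝ),
      0 ≤ ∑ i, ∑ j, c i * c j * k (x i) (x j))
    (hinj : ∀ P Q : Measure X, IsProbabilityMeasure P → IsProbabilityMeasure Q →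
      Integrable (fun x => Real.sqrt (k x x)) P →
      Integrable (fun x => Real.sqrt (k x x)) Q →
      (fun y => ∫ ω, k y ω ∂P) = (fun y => ∫ ω, k y ω ∂Q) → P = Q)
    (P Q : Measure X) [IsProbabilityMeasure P] [IsProbabilityMeasure Q]
    (hPk : Integrable (fun x => Real.sqrt (k x x)) P)
    (hQk : Integrable (fun x => Real.sqrt (k x x)) Q) :
    ((∫ x, ((1/2) * (∫ p, k p.1 p.2 ∂(P.prod P)) - (∫ X, k X x ∂P)
        + (1/2) * k x x) ∂P)
      ≤ ∫ x, ((1/2) * (∫ p, k p.1 p.2 ∂(Q.prod Q)) - (∫ X, k X x ∂Q)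
        + (1/2) * k x x) ∂P)
    ∧ ((∫ x, ((1/2) * (∫ p, k p.1 p.2 ∂(P.prod P)) - (∫ X, k X x ∂P)
        + (1/2) * k x x) ∂P)
      = (∫ x, ((1/2) * (∫ p, k p.1 p.2 ∂(Q.prod Q)) - (∫ X, k X x ∂Q)
        + (1/2) * k x x) ∂P)
      ↔ P = Q) := by
  change ∫ x, kernelScore k P x ∂P ≤ ∫ x, kernelScore k Q x ∂P
    ∧ (∫ x, kernelScore k P x ∂P = ∫ x, kernelScore k Q x ∂P ↔ P = Q)
  have hgap : ∫ x, kernelScore k Q x ∂P - ∫ x, kernelScore k P x ∂P = mmdSq k P Q / 2 := by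
    rw [integral_kernelScore hbd hmeas hsymm, integral_kernelScore hbd hmeas hsymm, mmdSq]
    ring
  have hmmd := mmdSq_nonneg hbd hmeas hsymm hpsd P Q
  refine ⟨by linarith, fun hscore => ?_, fun h => by subst h; rfl⟩
  exact hinj P Q inferInstance inferInstance hPk hQk
    (meanEmbedding_eq_of_mmdSq_eq_zero hbd hmeas hsymm hpsd P Q (by linarith))
end
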